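/- Let T, n, m be positive natural numbers, let y ∈ ℝ^T, let X_c ∈ ℝ^{T×n}, X_s ∈ ℝ^{T×m}, and X = [X_c X_s] ∈ ℝ^{T×(n+m)}. Let u ∈ ℝ^m be a nonnegative vector of the support agents' reservations to sell, and define the weight vector w ∈ ℝ^{n+m} by w_j = 0 for the first n coordinates and w_j = (T/2)·u_j for the last m coordinates. Suppose γ* ∈ ℝ^n minimizes ‖y − X_c γ‖₂² over γ ∈ ℝ^n, and β^{L1} ∈ ℝ^{n+m} minimizes the weighted lasso loss S^{L1}(X, w, β) = (1/T)·‖y − X β‖₂² + Σ_j (2/T)·w_j·|β_j| over β ∈ ℝ^{n+m}. Writing β^{L1}_s ∈ ℝ^m for the last m coordinates of β^{L1}, the reduction in mean squared error satisfies (1/T)·‖y − X_c γ*‖₂² − (1/T)·‖y − X β^{L1}‖₂² ≥ Σ_{j=1}^{m} u_j·|β^{L1}_{s,j}|; that is, the central agent's forecast-loss reduction is at least the total payment Σ_j |u_j·β^{L1}_{s,j}| owed to the support agents, so each support agent's payment threshold is met while the central agent still profits. -/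

import Mathlib

/-! Testing the lasso objective at the baseline coefficients `(γ*, 0)` gives the claim: that
vector fits `y` exactly as well as `γ*` does and costs no penalty, so the lasso minimizer's
mean squared error plus its penalty is at most the baseline mean squared error. With the weights
`(T/2)·u` on the support features the penalty is precisely the total payment `∑ⱼ uⱼ |βⱼ|`. -/

open Matrix in
theorem Matrix.fromCols_mulVec_sumElim_zero {R m n₁ n₂ : Type*} [Semiring R]
    [Fintype n₁] [Fintype n₂] (A₁ : Matrix m n₁ R) (A₂ : Matrix m n₂ R) (v : n₁ → R) :
    fromCols A₁ A₂ *ᵥ Sum.elim v 0 = A₁ *ᵥ v := by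
  rw [fromCols_mulVec_sumElim, mulVec_zero, add_zero]

theorem lasso_penalty_eq_total_payment {ι κ : Type*} [Fintype ι] [Fintype κ]
    {c : ℝ} (hc : c ≠ 0) (u : κ → ℝ) (β : ι ⊕ κ → ℝ) :
    ∑ j, (2 / c) * Sum.elim (fun _ : ι => (0 : ℝ)) (fun k => c / 2 * u k) j * |β j|
      = ∑ k, u k * |β (Sum.inr k)| := by
  rw [Fintype.sum_sum_type]
  simp only [Sum.elim_inl, Sum.elim_inr, mul_zero, zero_mul, Finset.sum_const_zero, zero_add]
  refine Finset.sum_congr rfl fun k _ => ?_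
  field_simp

theorem mse_reduction_ge_total_payment_general
    (T n m : ℕ) (hT : 0 < T)
    (y : Fin T → ℝ)
    (Xc : Matrix (Fin T) (Fin n) ℝ) (Xs : Matrix (Fin T) (Fin m) ℝ)
    (X : Matrix (Fin T) (Fin n ⊕ Fin m) ℝ) (hX : X = Matrix.fromCols Xc Xs)
    (u : Fin m → ℝ)
    (w : Fin n ⊕ Fin m → ℝ)
    (hw : w = Sum.elim (fun _ : Fin n => (0 : ℝ)) (fun j : Fin m => ((T : ℝ) / 2) * u j))
    (γstar : Fin n → ℝ)
    (βL1 : Fin n ⊕ Fin m → ℝ)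
    (hβ : ∀ β : Fin n ⊕ Fin m → ℝ,
      (1 / (T : ℝ)) * ∑ t, (y t - X.mulVec βL1 t) ^ 2
          + ∑ j, (2 / (T : ℝ)) * w j * |βL1 j|
        ≤ (1 / (T : ℝ)) * ∑ t, (y t - X.mulVec β t) ^ 2
          + ∑ j, (2 / (T : ℝ)) * w j * |β j|) :
    (1 / (T : ℝ)) * ∑ t, (y t - Xc.mulVec γstar t) ^ 2
        - (1 / (T : ℝ)) * ∑ t, (y t - X.mulVec βL1 t) ^ 2
      ≥ ∑ j : Fin m, u j * |βL1 (Sum.inr j)| := by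
  subst hX hw
  have hpay := lasso_penalty_eq_total_payment (ι := Fin n) (Nat.cast_ne_zero.mpr hT.ne') u
  have hbaseline := hβ (Sum.elim γstar 0)
  simp only [hpay, Matrix.fromCols_mulVec_sumElim_zero, Sum.elim_inr, Pi.zero_apply, abs_zero,
    mul_zero, Finset.sum_const_zero, add_zero] at hbaseline
  linarith

/-- With weights `w = 0` on the central agent's features and
`w = (T/2)·u` on the support features, the reduction in MSE achieved by the lasso
minimizer `βL1` relative to the OLS baseline `γ*` is at least the total payment
`∑ j, u j * |βL1 (inr j)|` owed to the support agents. -/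
theorem mse_reduction_ge_total_payment
    (T n m : ℕ) (hT : 0 < T) (hn : 0 < n) (hm : 0 < m)
    (y : Fin T → ℝ)
    (Xc : Matrix (Fin T) (Fin n) ℝ) (Xs : Matrix (Fin T) (Fin m) ℝ)
    (X : Matrix (Fin T) (Fin n ⊕ Fin m) ℝ) (hX : X = Matrix.fromCols Xc Xs)
    (u : Fin m → ℝ) (hu : ∀ j, 0 ≤ u j)
    (w : Fin n ⊕ Fin m → ℝ)
    (hw : w = Sum.elim (fun _ : Fin n => (0 : ℝ)) (fun j : Fin m => ((T : ℝ) / 2) * u j))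
    (γstar : Fin n → ℝ)
    (hγ : ∀ γ : Fin n → ℝ,
      ∑ t, (y t - Xc.mulVec γstar t) ^ 2 ≤ ∑ t, (y t - Xc.mulVec γ t) ^ 2)
    (βL1 : Fin n ⊕ Fin m → ℝ)
    (hβ : ∀ β : Fin n ⊕ Fin m → ℝ,
      (1 / (T : ℝ)) * ∑ t, (y t - X.mulVec βL1 t) ^ 2
          + ∑ j, (2 / (T : ℝ)) * w j * |βL1 j|
        ≤ (1 / (T : ℝ)) * ∑ t, (y t - X.mulVec β t) ^ 2
          + ∑ j, (2 / (T : ℝ)) * w j * |β j|) :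
    (1 / (T : ℝ)) * ∑ t, (y t - Xc.mulVec γstar t) ^ 2
        - (1 / (T : ℝ)) * ∑ t, (y t - X.mulVec βL1 t) ^ 2
      ≥ ∑ j : Fin m, u j * |βL1 (Sum.inr j)| :=
  mse_reduction_ge_total_payment_general T n m hT y Xc Xs X hX u w hw γstar βL1 hβ
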